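/- arXiv:cs/0609020 — 7 statements merged into one kernel-verified Lean document; each statement's English description precedes it below -/
import Mathlib

section
/- Let K be a field of characteristic zero and f ∈ K[[z]] with zero constant term. Define the sequence (g_i) by g₀ = 1 and g_{i+1} = (g_i·(1 + f − log(g_i))) mod z^{2^{i+1}}. Then each g_i has constant term 1 and g_i ≡ exp(f) mod z^{2^i} for all i ≥ 0; i.e., Brent's Newton iteration for the power series exponential doubles the precision at each step. -/
open PowerSeries

/-- `exp(f) = Σ_{k≥0} f^k / k!` for a power series `f` with zero constant term
(the sum is well defined coefficientwise since `f^k` has order `≥ k`). -/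
noncomputable def expPS {K : Type*} [Field K] (f : PowerSeries K) : PowerSeries K :=
  PowerSeries.mk fun n => ∑ k ∈ Finset.range (n + 1),
    ((k.factorial : K))⁻¹ * coeff n (f ^ k)

/-- `log(g) = -Σ_{k≥1} (1-g)^k / k` for a power series `g` with constant term `1`. -/
noncomputable def logPS {K : Type*} [Field K] (g : PowerSeries K) : PowerSeries K :=
  PowerSeries.mk fun n => -∑ k ∈ Finset.Icc 1 n, ((k : K))⁻¹ * coeff n ((1 - g) ^ k)

/-!
Write `E = exp f` and `g = E q`. Since `E' = E f'` and `g (log g)' = g'`, the series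
`u = f - log g` satisfies `q u' = -q'`, and the Newton step reads `g (1 + u) - E = E (q (1 + u) - 1)`.
If `q ≡ 1 mod z^n`, then `q' ≡ 0 mod z^(n-1)`, hence `u ≡ 0 mod z^n`, and `(q (1 + u))' = q' u`
vanishes modulo `z^(2n-1)`. In characteristic zero a series with zero constant term vanishes
modulo `z^(m+1)` as soon as its derivative vanishes modulo `z^m`, so `q (1 + u) ≡ 1 mod z^(2n)`.
The derivatives of `exp f` and `log g` come from the chain rule, after identifying them with the
substitutions of `f` into `exp X` and of `g - 1` into `log (1 + X)`.
-/

namespace PowerSeries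

section CommRing

variable {R : Type*} [CommRing R]

theorem coeff_pow_of_lt {f : R⟦X⟧} (hf : constantCoeff f = 0) {n k : ℕ} (h : n < k) :
    coeff n (f ^ k) = 0 :=
  X_pow_dvd_iff.mp (pow_dvd_pow_of_dvd (X_dvd_iff.mpr hf) k) n h

theorem coeff_subst_eq_sum_range {f : R⟦X⟧} (hf : constantCoeff f = 0) (a : R⟦X⟧) (n : ℕ) :
    coeff n (a.subst f) = ∑ k ∈ Finset.range (n + 1), coeff k a * coeff n (f ^ k) := by
  rw [coeff_subst' (HasSubst.of_constantCoeff_zero' hf),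
    finsum_eq_sum_of_support_subset _ (s := Finset.range (n + 1))]
  · simp only [smul_eq_mul]
  · intro k hk
    by_contra hkn
    simp only [Finset.coe_range, Set.mem_Iio, not_lt] at hkn
    exact hk (by simp only [coeff_pow_of_lt hf (Nat.lt_of_succ_le hkn), smul_zero])

theorem X_pow_dvd_trunc_sub (n : ℕ) (φ : R⟦X⟧) : X ^ n ∣ (trunc n φ : R⟦X⟧) - φ :=
  X_pow_dvd_iff.mpr fun m hm => by
    rw [map_sub, Polynomial.coeff_coe, coeff_trunc, if_pos hm, sub_self]

theorem constantCoeff_eq_of_X_dvd_sub {a b : R⟦X⟧} (h : X ∣ a - b) :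
    constantCoeff a = constantCoeff b := by
  rwa [X_dvd_iff, map_sub, sub_eq_zero] at h

theorem X_pow_dvd_derivative {u : R⟦X⟧} {n : ℕ} (h : X ^ (n + 1) ∣ u) : X ^ n ∣ d⁄dX R u :=
  X_pow_dvd_iff.mpr fun m hm => by
    rw [coeff_derivative, X_pow_dvd_iff.mp h (m + 1) (by omega), zero_mul]

theorem X_pow_succ_dvd_of_X_pow_dvd_derivative [IsAddTorsionFree R] {u : R⟦X⟧}
    (hu : constantCoeff u = 0) {n : ℕ} (h : X ^ n ∣ d⁄dX R u) : X ^ (n + 1) ∣ u := by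
  refine X_pow_dvd_iff.mpr fun m hm => ?_
  rcases m with _ | m
  · rwa [coeff_zero_eq_constantCoeff]
  have hm' : coeff m (d⁄dX R u) = 0 := X_pow_dvd_iff.mp h m (by omega)
  rw [coeff_derivative, ← Nat.cast_succ, mul_comm, ← nsmul_eq_mul] at hm'
  exact (smul_eq_zero_iff_right m.succ_ne_zero).mp hm'

/-- Newton's iteration `h ↦ h (1 - log h)` for solving `log h = 0`, with `u` playing `-log h`. -/
theorem X_pow_two_mul_dvd_mul_one_add_sub_one [IsAddTorsionFree R] {h u : R⟦X⟧}
    (hu0 : constantCoeff u = 0) (hu : h * d⁄dX R u = -d⁄dX R h) {n : ℕ} (hh : X ^ n ∣ h - 1) :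
    X ^ (2 * n) ∣ h * (1 + u) - 1 := by
  rcases n with _ | n
  · simp
  have hh0 : constantCoeff h = 1 := by
    simpa using constantCoeff_eq_of_X_dvd_sub ((dvd_pow_self X n.succ_ne_zero).trans hh)
  have hdh : X ^ n ∣ d⁄dX R h := by simpa using X_pow_dvd_derivative hh
  have hdu : X ^ n ∣ d⁄dX R u := by
    rw [← (isUnit_iff_constantCoeff.mpr (hh0 ▸ isUnit_one)).dvd_mul_left, hu]
    exact hdh.neg_right
  have hun : X ^ (n + 1) ∣ u := X_pow_succ_dvd_of_X_pow_dvd_derivative hu0 hdu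
  have hderiv : d⁄dX R (h * (1 + u) - 1) = d⁄dX R h * u := by
    simp only [map_sub, Derivation.leibniz, map_add, Derivation.map_one_eq_zero, smul_eq_mul]
    linear_combination hu
  rw [show 2 * (n + 1) = n + (n + 1) + 1 by ring]
  refine X_pow_succ_dvd_of_X_pow_dvd_derivative (by simp [hh0, hu0]) ?_
  rw [hderiv, pow_add]
  exact mul_dvd_mul hdh hun

end CommRing

theorem one_add_X_mul_derivative_log {A : Type*} [CommRing A] [Algebra ℚ A] :
    (1 + X) * d⁄dX A (log A) = 1 := by
  ext n
  rw [deriv_log]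
  rcases n with _ | n
  · simp
  · rw [add_mul, one_mul, map_add, coeff_succ_X_mul, coeff_mk, coeff_mk, coeff_one]
    simp [pow_succ]

section Field

variable {K : Type*} [Field K]

theorem constantCoeff_expPS (f : K⟦X⟧) : constantCoeff (expPS f) = 1 := by
  rw [← coeff_zero_eq_constantCoeff_apply, expPS, coeff_mk]
  simp

theorem constantCoeff_logPS (g : K⟦X⟧) : constantCoeff (logPS g) = 0 := by
  rw [← coeff_zero_eq_constantCoeff_apply, logPS, coeff_mk]
  simp

variable [CharZero K]

theorem expPS_eq_subst {f : K⟦X⟧} (hf : constantCoeff f = 0) : expPS f = (exp K).subst f := by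
  ext n
  rw [coeff_subst_eq_sum_range hf, expPS, coeff_mk]
  simp [coeff_exp]

theorem logPS_eq_logOf {g : K⟦X⟧} (hg : constantCoeff g = 1) : logPS g = logOf g := by
  ext n
  rw [logOf_eq, coeff_subst_eq_sum_range (by simp [hg]), logPS, coeff_mk, Finset.range_eq_Ico,
    Finset.sum_eq_sum_Ico_succ_bot (by omega : 0 < n + 1), zero_add,
    Finset.Ico_add_one_right_eq_Icc, ← Finset.sum_neg_distrib]
  simp only [coeff_log, if_pos, zero_mul, zero_add]
  refine Finset.sum_congr rfl fun k hk => ?_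
  have hk0 : k ≠ 0 := by have := (Finset.mem_Icc.mp hk).1; omega
  have hpow : (g - 1) ^ k = C ((-1 : K) ^ k) * (1 - g) ^ k := by
    rw [← neg_sub, neg_pow, map_pow, map_neg, map_one]
  rw [if_neg hk0, hpow, coeff_C_mul]
  push_cast
  ring_nf
  simp [pow_mul']

theorem derivative_expPS {f : K⟦X⟧} (hf : constantCoeff f = 0) :
    d⁄dX K (expPS f) = expPS f * d⁄dX K f := by
  rw [expPS_eq_subst hf, derivative_subst (HasSubst.of_constantCoeff_zero' hf), derivative_exp]

theorem mul_derivative_logPS {g : K⟦X⟧} (hg : constantCoeff g = 1) :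
    g * d⁄dX K (logPS g) = d⁄dX K g := by
  have hsub : HasSubst (g - 1) := HasSubst.of_constantCoeff_zero' (by simp [hg])
  have hinv : g * (d⁄dX K (log K)).subst (g - 1) = 1 := by
    have := congrArg (substAlgHom (R := K) hsub) one_add_X_mul_derivative_log
    rwa [map_mul, map_add, map_one, substAlgHom_X, add_sub_cancel, coe_substAlgHom] at this
  rw [logPS_eq_logOf hg, logOf_eq, derivative_subst hsub, ← mul_assoc, hinv, one_mul, map_sub,
    derivative_one, sub_zero]

theorem X_pow_two_mul_dvd_newton_exp_step {f g : K⟦X⟧} (hf : constantCoeff f = 0)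
    (hg : constantCoeff g = 1) {n : ℕ} (hgn : X ^ n ∣ g - expPS f) :
    X ^ (2 * n) ∣ g * (1 + f - logPS g) - expPS f := by
  set E := expPS f
  have hE : constantCoeff E ≠ 0 := by simp [E, constantCoeff_expPS]
  set q := E⁻¹ * g
  have hq : E * q = g := by rw [← mul_assoc, PowerSeries.mul_inv_cancel E hE, one_mul]
  have hqu : q * d⁄dX K (f - logPS g) = -d⁄dX K q := by
    refine mul_left_cancel₀ (ne_zero_of_map hE) ?_
    have hdg : d⁄dX K g = d⁄dX K E * q + E * d⁄dX K q := by
      rw [← hq, Derivation.leibniz, smul_eq_mul, smul_eq_mul, add_comm, mul_comm q]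
    rw [← mul_assoc, hq, map_sub, mul_sub, mul_derivative_logPS hg, hdg, derivative_expPS hf, ← hq]
    ring
  have hqn : X ^ n ∣ q - 1 := by
    rwa [← (isUnit_iff_constantCoeff.mpr hE.isUnit).dvd_mul_left, mul_sub, mul_one, hq]
  have hnewton :=
    X_pow_two_mul_dvd_mul_one_add_sub_one (by simp [hf, constantCoeff_logPS]) hqu hqn
  rw [show g * (1 + f - logPS g) - E = E * (q * (1 + (f - logPS g)) - 1) by rw [← hq]; ring]
  exact dvd_mul_of_dvd_right hnewton E

end Field

end PowerSeries

/-- Brent's Newton iteration for the power series exponential doubles the precision at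
each step: if `f(0) = 0`, `g 0 = 1` and `g (i+1) = g i * (1 + f - log (g i)) mod z^(2^(i+1))`,
then `g i` has constant term `1` and `g i ≡ exp f mod z^(2^i)`. -/
theorem newton_exp_doubles_precision {K : Type*} [Field K] [CharZero K]
    (f : PowerSeries K) (hf : constantCoeff f = 0)
    (g : ℕ → PowerSeries K)
    (hg0 : g 0 = 1)
    (hstep : ∀ i : ℕ,
      g (i + 1) =
        ((trunc (2 ^ (i + 1)) (g i * (1 + f - logPS (g i))) : Polynomial K) : PowerSeries K)) :
    ∀ i : ℕ, constantCoeff (g i) = 1 ∧ ∀ j < 2 ^ i, coeff j (g i) = coeff j (expPS f) := by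
  have hconst : ∀ i, X ^ 2 ^ i ∣ g i - expPS f → constantCoeff (g i) = 1 := fun i h => by
    rw [constantCoeff_eq_of_X_dvd_sub ((dvd_pow_self X (pow_ne_zero i two_ne_zero)).trans h),
      constantCoeff_expPS]
  have hprec : ∀ i, X ^ 2 ^ i ∣ g i - expPS f := by
    intro i
    induction i with
    | zero => rw [hg0, pow_zero, pow_one, X_dvd_iff, map_sub, map_one, constantCoeff_expPS,
        sub_self]
    | succ i ih =>
      rw [hstep i, pow_succ', ← sub_add_sub_cancel _ (g i * (1 + f - logPS (g i)))]
      exact dvd_add (X_pow_dvd_trunc_sub _ _)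
        (X_pow_two_mul_dvd_newton_exp_step hf (hconst i ih) ih)
  intro i
  refine ⟨hconst i (hprec i), fun j hj => sub_eq_zero.mp ?_⟩
  rw [← map_sub]
  exact X_pow_dvd_iff.mp (hprec i) j hj
end

section
/- Let K be a field of characteristic p > 0, let A, B ∈ K, let n ≥ 2 be an integer and assume p > 2n + 3. Define c₁ = −A/5, c₂ = −B/7, and for 3 ≤ k ≤ n define c_k = (3/((k−2)(2k+3))) · Σ_{i=1}^{k−2} c_i c_{k−1−i}; all the integers inverted here are nonzero in K, being positive and at most 2n+3 < p. Then the polynomial P_n = 1 + Σ_{k=1}^{n} c_k z^{2k+2}, viewed in K[[z]], satisfies (z·P_n' − 2·P_n)² ≡ 4·(P_n³ + A·z⁴·P_n + B·z⁶) mod z^{2n+3}. -/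
/-!
Write `θ = z d/dz` and `W = θP - 2P`, which is `z³℘'` for `℘ = P/z²`. The defect
`E = W² - 4(P³ + Az⁴P + Bz⁶)` of the first-order equation satisfies `θE - 6E = 2W·G`, where
`G = (θ - 3)W - 6P² - 2Az⁴` is the defect of the second-order equation `℘'' = 6℘² + 2A`.
The recurrence for `c_k` says exactly that the coefficient of `z^(2k+2)` in `G` vanishes, so
`z^(2n+3) ∣ G` and hence `(j - 6)·[z^j]E = 0` for `j < 2n+3`. As `p > 2n+3`, this kills the
coefficients of index `j ≥ 8`, while `c₁ = -A/5` and `c₂ = -B/7` make `E ≡ 0 mod z⁸` directly.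
-/

open PowerSeries

theorem Derivation.weierstrass_identity {R A : Type*} [CommRing R] [CommRing A] [Algebra R A]
    (D : Derivation R A A) {x a b : A} (hx : D x = x) (ha : D a = 0) (hb : D b = 0) (P : A) :
    D ((D P - 2 * P) ^ 2 - 4 * (P ^ 3 + a * x ^ 4 * P + b * x ^ 6))
        - 6 * ((D P - 2 * P) ^ 2 - 4 * (P ^ 3 + a * x ^ 4 * P + b * x ^ 6))
      = 2 * (D P - 2 * P) * (D (D P - 2 * P) - 3 * (D P - 2 * P) - 6 * P ^ 2 - 2 * a * x ^ 4) := by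
  have hnum (n : ℕ) [n.AtLeastTwo] : D (OfNat.ofNat n : A) = 0 := D.map_natCast n
  simp only [map_sub, map_add, Derivation.leibniz, Derivation.leibniz_pow, hx, ha, hb, hnum,
    smul_eq_mul, nsmul_eq_mul]
  ring

namespace PowerSeries

section CommSemiring

variable (R : Type*) [CommSemiring R]

noncomputable def eulerOp : Derivation R R⟦X⟧ R⟦X⟧ := (X : R⟦X⟧) • d⁄dX R

variable {R}

@[simp] theorem eulerOp_apply (f : R⟦X⟧) : eulerOp R f = X * d⁄dX R f := rfl

theorem coeff_eulerOp (f : R⟦X⟧) (j : ℕ) : coeff j (eulerOp R f) = j * coeff j f := by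
  rcases j with _ | j
  · simp
  · rw [eulerOp_apply, coeff_succ_X_mul, coeff_derivative]
    push_cast; ring

theorem eulerOp_X : eulerOp R X = X := by simp

theorem eulerOp_C (r : R) : eulerOp R (C r) = 0 := by simp

theorem X_pow_dvd_eulerOp {m : ℕ} {f : R⟦X⟧} (h : X ^ m ∣ f) : X ^ m ∣ eulerOp R f := by
  rw [X_pow_dvd_iff] at h ⊢
  intro j hj
  rw [coeff_eulerOp, h j hj, mul_zero]

noncomputable def weierstrassTail (c : ℕ → R) (n : ℕ) : R⟦X⟧ :=
  ∑ k ∈ Finset.Icc 1 n, C (c k) * X ^ (2 * k + 2)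

variable (c : ℕ → R) (n : ℕ)

theorem coeff_weierstrassTail (j : ℕ) :
    coeff j (weierstrassTail c n) = ∑ k ∈ Finset.Icc 1 n, if j = 2 * k + 2 then c k else 0 := by
  simp only [weierstrassTail, map_sum, coeff_C_mul_X_pow]

theorem coeff_weierstrassTail_sq (j : ℕ) :
    coeff j (weierstrassTail c n ^ 2) = ∑ k ∈ Finset.Icc 1 n, ∑ l ∈ Finset.Icc 1 n,
      if j = 2 * (k + l) + 4 then c k * c l else 0 := by
  rw [weierstrassTail, sq, Finset.sum_mul_sum, map_sum]
  refine Finset.sum_congr rfl fun k _ => ?_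
  rw [map_sum]
  refine Finset.sum_congr rfl fun l _ => ?_
  rw [mul_mul_mul_comm, ← map_mul, ← pow_add, coeff_C_mul_X_pow]
  congr 2
  ring

theorem coeff_two_mul_add_two_weierstrassTail {m : ℕ} (hm : m ≤ n) :
    coeff (2 * m + 2) (weierstrassTail c n) = if 1 ≤ m then c m else 0 := by
  rw [coeff_weierstrassTail]
  simp only [Nat.add_right_cancel_iff, Nat.mul_left_cancel_iff two_pos, Finset.sum_ite_eq,
    Finset.mem_Icc]
  simp [hm]

theorem coeff_two_mul_add_two_weierstrassTail_sq {m : ℕ} (hm : m ≤ n) :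
    coeff (2 * m + 2) (weierstrassTail c n ^ 2)
      = ∑ i ∈ Finset.Icc 1 (m - 2), c i * c (m - 1 - i) := by
  have hIcc : Finset.Icc 1 (m - 2) = (Finset.Icc 1 n).filter (· ≤ m - 2) := by
    ext; simp only [Finset.mem_Icc, Finset.mem_filter]; omega
  rw [coeff_weierstrassTail_sq, hIcc, Finset.sum_filter]
  refine Finset.sum_congr rfl fun k hk => ?_
  rw [Finset.mem_Icc] at hk
  split_ifs with hkm
  · rw [Finset.sum_eq_single_of_mem (m - 1 - k) (Finset.mem_Icc.mpr ⟨by omega, by omega⟩)]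
    · rw [if_pos (by omega)]
    · intro l _ hl
      rw [if_neg (by omega)]
  · exact Finset.sum_eq_zero fun l hl => if_neg (by rw [Finset.mem_Icc] at hl; omega)

theorem coeff_weierstrassTail_of_ne {j : ℕ} (hj : ∀ m, j ≠ 2 * m + 2) :
    coeff j (weierstrassTail c n) = 0 := by
  rw [coeff_weierstrassTail]
  exact Finset.sum_eq_zero fun k _ => if_neg (hj k)

theorem coeff_weierstrassTail_sq_of_ne {j : ℕ} (hj : ∀ m, j ≠ 2 * m + 2) :
    coeff j (weierstrassTail c n ^ 2) = 0 := by
  rw [coeff_weierstrassTail_sq]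
  exact Finset.sum_eq_zero fun k _ => Finset.sum_eq_zero fun l _ =>
    if_neg fun h => hj (k + l + 1) (by omega)

end CommSemiring

section CommRing

variable {R : Type*} [CommRing R]

theorem X_pow_dvd_of_X_pow_dvd_eulerOp_sub [NoZeroDivisors R] {f : R⟦X⟧} {k m N : ℕ}
    (hlow : X ^ k ∣ f) (heig : X ^ N ∣ eulerOp R f - (m : R⟦X⟧) * f)
    (hm : ∀ j, k ≤ j → j < N → (j : R) ≠ m) : X ^ N ∣ f := by
  rw [X_pow_dvd_iff] at hlow heig ⊢
  intro j hj
  by_cases hjk : j < k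
  · exact hlow j hjk
  · have h := heig j hj
    rw [map_sub, coeff_eulerOp, ← map_natCast C, coeff_C_mul, ← sub_mul] at h
    exact (mul_eq_zero.mp h).resolve_left (sub_ne_zero.mpr (hm j (by omega) hj))

noncomputable def weierstrassDefect (A B : R) (P : R⟦X⟧) : R⟦X⟧ :=
  (eulerOp R P - 2 * P) ^ 2 - 4 * (P ^ 3 + C A * X ^ 4 * P + C B * X ^ 6)

noncomputable def weierstrassSecondOrder (A : R) (P : R⟦X⟧) : R⟦X⟧ :=
  eulerOp R (eulerOp R P - 2 * P) - 3 * (eulerOp R P - 2 * P) - 6 * P ^ 2 - 2 * C A * X ^ 4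

theorem eulerOp_weierstrassDefect (A B : R) (P : R⟦X⟧) :
    eulerOp R (weierstrassDefect A B P) - 6 * weierstrassDefect A B P
      = 2 * (eulerOp R P - 2 * P) * weierstrassSecondOrder A P :=
  (eulerOp R).weierstrass_identity eulerOp_X (eulerOp_C A) (eulerOp_C B) P

theorem X_pow_dvd_weierstrassSecondOrder {A : R} {c : ℕ → R} {n : ℕ} (hc1 : 5 * c 1 = -A)
    (hrec : ∀ k, 3 ≤ k → k ≤ n → ((k : R) - 2) * (2 * k + 3) * c k
      = 3 * ∑ i ∈ Finset.Icc 1 (k - 2), c i * c (k - 1 - i)) :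
    X ^ (2 * n + 3) ∣ weierstrassSecondOrder A (1 + weierstrassTail c n) := by
  set S := weierstrassTail c n
  have hG : weierstrassSecondOrder A (1 + S) = eulerOp R (eulerOp R S) - C 5 * eulerOp R S
      - C 6 * S - C 6 * S ^ 2 - C (2 * A) * X ^ 4 := by
    have h2 : eulerOp R (2 : R⟦X⟧) = 0 := (eulerOp R).map_natCast 2
    simp only [weierstrassSecondOrder, map_add, map_sub, map_zero, Derivation.leibniz, h2,
      Derivation.map_one_eq_zero, smul_eq_mul, map_mul, map_ofNat]
    ring
  rw [hG, X_pow_dvd_iff]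
  intro j hj
  simp only [map_sub, coeff_eulerOp, coeff_C_mul, coeff_X_pow]
  by_cases hev : ∃ m, j = 2 * m + 2
  · obtain ⟨m, rfl⟩ := hev
    rw [coeff_two_mul_add_two_weierstrassTail c n (by omega),
      coeff_two_mul_add_two_weierstrassTail_sq c n (by omega)]
    rcases lt_or_ge m 3 with hm | hm
    · interval_cases m
      · simp
      · norm_num
        linear_combination -2 * hc1
      · norm_num
        ring
    · rw [if_pos (by omega), if_neg (by omega)]
      push_cast
      linear_combination 2 * hrec m hm (by omega)
  · push Not at hev
    rw [coeff_weierstrassTail_of_ne c n hev, coeff_weierstrassTail_sq_of_ne c n hev,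
      if_neg fun h => hev 1 h]
    ring

theorem X_pow_eight_dvd_weierstrassDefect {A B : R} {c : ℕ → R} {n : ℕ} (hn : 2 ≤ n)
    (hc1 : 5 * c 1 = -A) (hc2 : 7 * c 2 = -B) :
    X ^ 8 ∣ weierstrassDefect A B (1 + weierstrassTail c n) := by
  set r := ∑ k ∈ Finset.Icc 3 n, C (c k) * X ^ (2 * k + 2)
  have hr : X ^ 8 ∣ r :=
    Finset.dvd_sum fun k hk => (pow_dvd_pow X (by simp at hk; omega)).mul_left _
  obtain ⟨r', hr'⟩ := hr
  obtain ⟨s', hs'⟩ := X_pow_dvd_eulerOp (R := R) ⟨r', hr'⟩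
  have hS : weierstrassTail c n = C (c 1) * X ^ 4 + C (c 2) * X ^ 6 + r := by
    have hIcc : Finset.Icc 1 n = insert 1 (insert 2 (Finset.Icc 3 n)) := by
      ext; simp only [Finset.mem_Icc, Finset.mem_insert]; omega
    rw [weierstrassTail, hIcc, Finset.sum_insert (by simp), Finset.sum_insert (by simp)]
    ring
  have hθP : eulerOp R (1 + weierstrassTail c n)
      = 4 * C (c 1) * X ^ 4 + 6 * C (c 2) * X ^ 6 + eulerOp R r := by
    rw [hS]
    simp only [map_add, Derivation.leibniz, Derivation.leibniz_pow, Derivation.map_one_eq_zero,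
      eulerOp_X, eulerOp_C, smul_eq_mul, nsmul_eq_mul]
    push_cast
    ring
  set a := C (c 1)
  set b := C (c 2)
  have hA : C A = -5 * a := by
    rw [show A = -5 * c 1 by linear_combination hc1, map_mul, map_neg, map_ofNat]
  have hB : C B = -7 * b := by
    rw [show B = -7 * c 2 by linear_combination hc2, map_mul, map_neg, map_ofNat]
  -- `X⁴ * u = P - 1` and `X⁴ * v = θP`; the witness is `E / X⁸` written in terms of `u` and `v`.
  set u := a + b * X ^ 2 + X ^ 4 * r'
  set v := 4 * a + 6 * b * X ^ 2 + X ^ 4 * s'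
  refine ⟨-4 * (r' + s') + v ^ 2 - 4 * u * v - 8 * u ^ 2 - 4 * X ^ 4 * u ^ 3 + 20 * a * u, ?_⟩
  rw [weierstrassDefect, hθP, hS, hs', hr', hA, hB]
  ring

end CommRing

end PowerSeries

/-- In characteristic `p > 2n+3`, the coefficients `c_1, …, c_n` defined by
`c₁ = −A/5`, `c₂ = −B/7` and the recurrence
`c_k = (3/((k−2)(2k+3)))·Σ_{i=1}^{k−2} c_i c_{k−1−i}` (3 ≤ k ≤ n) give a polynomial
`P_n = 1 + Σ_{k=1}^n c_k z^(2k+2)` satisfying the power-series Weierstrass equation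
`(z·P_n' − 2·P_n)² ≡ 4·(P_n³ + A·z⁴·P_n + B·z⁶) mod z^(2n+3)`. -/
theorem weierstrass_truncation_positive_char {K : Type*} [Field K]
    (p : ℕ) [CharP K p] (A B : K) (n : ℕ) (hn : 2 ≤ n) (hp : 2 * n + 3 < p)
    (c : ℕ → K) (hc1 : c 1 = -A / 5) (hc2 : c 2 = -B / 7)
    (hck : ∀ k, 3 ≤ k → k ≤ n →
      c k = 3 / (((k : K) - 2) * (2 * (k : K) + 3)) *
        ∑ i ∈ Finset.Icc 1 (k - 2), c i * c (k - 1 - i))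
    (Pn : PowerSeries K)
    (hPn : Pn = 1 + ∑ k ∈ Finset.Icc 1 n, C (c k) * X ^ (2 * k + 2)) :
    ∀ j < 2 * n + 3,
      coeff j ((X * d⁄dX K Pn - 2 * Pn) ^ 2)
        = coeff j (4 * (Pn ^ 3 + C A * X ^ 4 * Pn + C B * X ^ 6)) := by
  have hcast {a b : ℕ} (ha : a < p) (hb : b < p) (hab : a ≠ b) : (a : K) ≠ b :=
    fun h => hab (CharP.natCast_injOn_Iio K p ha hb h)
  have h5 : (5 : K) ≠ 0 := by
    exact_mod_cast hcast (a := 5) (b := 0) (by omega) (by omega) (by omega)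
  have h7 : (7 : K) ≠ 0 := by
    exact_mod_cast hcast (a := 7) (b := 0) (by omega) (by omega) (by omega)
  have hc1' : 5 * c 1 = -A := by rw [hc1, mul_div_cancel₀ _ h5]
  have hc2' : 7 * c 2 = -B := by rw [hc2, mul_div_cancel₀ _ h7]
  have hrec : ∀ k, 3 ≤ k → k ≤ n → ((k : K) - 2) * (2 * k + 3) * c k
      = 3 * ∑ i ∈ Finset.Icc 1 (k - 2), c i * c (k - 1 - i) := by
    intro k hk3 hkn
    have hk2 : (k : K) - 2 ≠ 0 :=
      sub_ne_zero.mpr (by exact_mod_cast hcast (b := 2) (by omega) (by omega) (by omega))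
    have hk3' : 2 * (k : K) + 3 ≠ 0 := by
      exact_mod_cast hcast (a := 2 * k + 3) (b := 0) (by omega) (by omega) (by omega)
    rw [hck k hk3 hkn, ← mul_assoc, mul_div_cancel₀ _ (mul_ne_zero hk2 hk3')]
  have hPn' : Pn = 1 + weierstrassTail c n := hPn
  have hE : X ^ (2 * n + 3) ∣ weierstrassDefect A B Pn := by
    rw [hPn']
    refine X_pow_dvd_of_X_pow_dvd_eulerOp_sub (m := 6)
      (X_pow_eight_dvd_weierstrassDefect hn hc1' hc2') ?_
      fun j hj8 hjN => by exact_mod_cast hcast (b := 6) (by omega) (by omega) (by omega)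
    rw [Nat.cast_ofNat, eulerOp_weierstrassDefect]
    exact (X_pow_dvd_weierstrassSecondOrder hc1' hrec).mul_left _
  intro j hj
  rw [← sub_eq_zero, ← map_sub]
  exact X_pow_dvd_iff.mp hE j hj
end

section
/- Let K be a field, A, B ∈ K, and let R ∈ K[[z]] be of the form R = z·V with V ∈ K[[z]] and V(0) = 1, and suppose R satisfies R'² = B·R⁶ + A·R⁴ + 1. Then the power series P := V⁻² has constant coefficient 1 and satisfies (z·P' − 2·P)² = 4·(P³ + A·z⁴·P + B·z⁶). -/
open PowerSeries

/-! Differentiating `V²·P = 1` shows `(z·P' − 2·P)·V³ = −2·R'`; squaring, the differential equation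
for `R = z·V` turns the right-hand side into `4·(B·z⁶·V⁶ + A·z⁴·V⁴ + 1)`, which is
`4·(P³ + A·z⁴·P + B·z⁶)·V⁶` since `P·V² = 1`. -/

theorem Derivation.pow_three_mul_map_eq_of_sq_mul_eq_one {R A : Type*} [CommRing R] [CommRing A]
    [Algebra R A] (D : Derivation R A A) {V P : A} (h : V ^ 2 * P = 1) :
    V ^ 3 * D P = -2 * D V := by
  have hD : V ^ 2 * D P + P * (2 * (V * D V)) = 0 := by
    simpa [Derivation.leibniz, Derivation.leibniz_pow] using congrArg D h
  linear_combination V * hD - 2 * D V * h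

theorem PowerSeries.X_mul_derivative_sub_two_mul_mul_pow_three {R : Type*} [CommRing R]
    {V P : R⟦X⟧} (h : V ^ 2 * P = 1) :
    (X * d⁄dX R P - 2 * P) * V ^ 3 = -2 * d⁄dX R (X * V) := by
  have hP := (d⁄dX R).pow_three_mul_map_eq_of_sq_mul_eq_one h
  rw [Derivation.leibniz, derivative_X, smul_eq_mul, smul_eq_mul]
  linear_combination X * hP - 2 * V * h

/-- Correctness of the fast algorithm computing `℘` from the solution `R` of
`R'² = B·R⁶ + A·R⁴ + 1`: if `R = z·V` with `V(0) = 1` satisfies this equation,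
then `P := V⁻²` (so that `P = z²·℘ = z²/R²`) has constant coefficient `1` and
satisfies `(z·P' − 2·P)² = 4·(P³ + A·z⁴·P + B·z⁶)`. -/
theorem wp_from_R {K : Type*} [Field K] (A B : K)
    (V R : PowerSeries K) (hV : constantCoeff V = 1) (hR : R = X * V)
    (hode : (d⁄dX K R) ^ 2 = C B * R ^ 6 + C A * R ^ 4 + 1)
    (P : PowerSeries K) (hP : P = (V ^ 2)⁻¹) :
    constantCoeff P = 1 ∧
      (X * d⁄dX K P - 2 * P) ^ 2 = 4 * (P ^ 3 + C A * X ^ 4 * P + C B * X ^ 6) := by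
  have hu : V ^ 2 * P = 1 := hP ▸ PowerSeries.mul_inv_cancel _ (by simp [hV])
  refine ⟨by simpa [hV] using congrArg constantCoeff hu, ?_⟩
  have hV6 : V ^ 6 ≠ 0 := pow_ne_zero _ fun h ↦ by simp [h] at hV
  have hcube := X_mul_derivative_sub_two_mul_mul_pow_three hu
  subst hR
  refine mul_right_cancel₀ hV6 ?_
  linear_combination ((X * d⁄dX K P - 2 * P) * V ^ 3 - 2 * d⁄dX K (X * V)) * hcube + 4 * hode
    - 4 * (P ^ 2 * V ^ 4 + P * V ^ 2 + 1 + C A * X ^ 4 * V ^ 4) * hu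
end

section
/- Let K be a field, A, B ∈ K, and let S be a finite multiset of elements of K. Set ℓ = |S| + 1, σ = Σ_{t∈S} t, D = ∏_{t∈S}(X − t) ∈ K[X], and for each t occurring in S let D_t = ∏_{s ∈ S minus one occurrence of t}(X − s), so that D = (X−t)·D_t. Then the following identity holds in K[X]: X·D² + Σ_{t∈S} [ (3t² + A)·D·D_t + 2·(t³ + A·t + B)·D_t² ] = (ℓ·X − σ)·D² − (3X² + A)·D'·D − 2·(X³ + A·X + B)·(D''·D − D'²), where all sums over S count multiplicity. -/
open Polynomial

private lemma deriv_prod {K : Type*} [Field K] [DecidableEq K] (S : Multiset K) :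
    derivative ((S.map (fun t => X - C t)).prod)
      = (S.map (fun t => ((S.erase t).map (fun s => X - C s)).prod)).sum := by
  induction S using Multiset.induction with
  | empty => simp
  | cons a S ih =>
    rw [Multiset.map_cons, Multiset.prod_cons, derivative_mul, ih, Multiset.map_cons,
      Multiset.erase_cons_head, Multiset.sum_cons]
    have h : (S.map (fun t => (((a ::ₘ S).erase t).map (fun s => X - C s)).prod))
        = S.map (fun t => (X - C a) * ((S.erase t).map (fun s => X - C s)).prod) := by
      refine Multiset.map_congr rfl fun t ht => ?_
      rw [Multiset.erase_cons_tail_of_mem ht, Multiset.map_cons, Multiset.prod_cons]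
    rw [h, Multiset.sum_map_mul_left]
    simp

private lemma second_deriv_prod {K : Type*} [Field K] [DecidableEq K] (S : Multiset K) :
    derivative (derivative ((S.map (fun t => X - C t)).prod))
        * (S.map (fun t => X - C t)).prod
      - (derivative ((S.map (fun t => X - C t)).prod)) ^ 2
      = -(S.map (fun t => (((S.erase t).map (fun s => X - C s)).prod) ^ 2)).sum := by
  induction S using Multiset.induction with
  | empty => simp
  | cons a S ih =>
    rw [Multiset.map_cons, Multiset.prod_cons]
    set P := (S.map (fun t => X - C t)).prod with hP
    have hd : derivative ((X - C a) * P) = P + (X - C a) * derivative P := by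
      rw [derivative_mul]; simp
    rw [hd]
    have hdd : derivative (P + (X - C a) * derivative P)
        = 2 * derivative P + (X - C a) * derivative (derivative P) := by
      rw [derivative_add, derivative_mul]; simp; ring
    rw [hdd, Multiset.map_cons, Multiset.erase_cons_head, Multiset.sum_cons]
    have h : (S.map (fun t => ((((a ::ₘ S).erase t).map (fun s => X - C s)).prod) ^ 2))
        = S.map (fun t =>
            (X - C a) ^ 2 * (((S.erase t).map (fun s => X - C s)).prod) ^ 2) := by
      refine Multiset.map_congr rfl fun t ht => ?_
      rw [Multiset.erase_cons_tail_of_mem ht, Multiset.map_cons, Multiset.prod_cons, mul_pow]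
    rw [h, Multiset.sum_map_mul_left]
    have : (2 * derivative P + (X - C a) * derivative (derivative P)) * ((X - C a) * P)
        - (P + (X - C a) * derivative P) ^ 2
        = (X - C a) ^ 2 * (derivative (derivative P) * P - (derivative P) ^ 2) - P ^ 2 := by
      ring
    rw [this, ih]
    ring

private lemma sum_X_sub_C {K : Type*} [Field K] (S : Multiset K) :
    (S.map (fun t => X - C t)).sum
      = C ((Multiset.card S : K)) * X - C S.sum := by
  induction S using Multiset.induction with
  | empty => simp
  | cons a S ih =>
    rw [Multiset.map_cons, Multiset.sum_cons, ih, Multiset.card_cons, Multiset.sum_cons]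
    push_cast
    rw [map_add, map_add, map_one]
    ring

/-- Polynomial form of Vélu's formula / Eq. (eqND) of the paper: for a finite
multiset `S` of abscissas, with `ℓ = |S| + 1`, `σ = Σ_{t∈S} t`,
`D = ∏_{t∈S}(X − t)` and `D_t = ∏_{s ∈ S \ t}(X − s)`, one has
`X·D² + Σ_{t∈S} [(3t²+A)·D·D_t + 2·(t³+At+B)·D_t²]
  = (ℓ·X − σ)·D² − (3X²+A)·D'·D − 2·(X³+AX+B)·(D''·D − D'²)` in `K[X]`. -/
theorem velu_polynomial_identity {K : Type*} [Field K] [DecidableEq K] (A B : K) (S : Multiset K)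
    (ℓ : ℕ) (hℓ : ℓ = Multiset.card S + 1) (σ : K) (hσ : σ = S.sum)
    (D : Polynomial K) (hD : D = (S.map (fun t => X - C t)).prod)
    (Dt : K → Polynomial K)
    (hDt : ∀ t ∈ S, Dt t = ((S.erase t).map (fun s => X - C s)).prod) :
    X * D ^ 2 +
        (S.map (fun t =>
          C (3 * t ^ 2 + A) * D * Dt t + 2 * C (t ^ 3 + A * t + B) * (Dt t) ^ 2)).sum
      = (C (ℓ : K) * X - C σ) * D ^ 2
          - (3 * X ^ 2 + C A) * derivative D * D
          - 2 * (X ^ 3 + C A * X + C B) * (derivative (derivative D) * D - (derivative D) ^ 2) := by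
  -- termwise rewriting
  have key : (S.map (fun t =>
        C (3 * t ^ 2 + A) * D * Dt t + 2 * C (t ^ 3 + A * t + B) * (Dt t) ^ 2))
      = S.map (fun t =>
          (X - C t) * D ^ 2
          + (-((3 * X ^ 2 + C A) * D)) * ((S.erase t).map (fun s => X - C s)).prod
          + (2 * (X ^ 3 + C A * X + C B))
              * (((S.erase t).map (fun s => X - C s)).prod) ^ 2) := by
    refine Multiset.map_congr rfl fun t ht => ?_
    have hfac : D = (X - C t) * ((S.erase t).map (fun s => X - C s)).prod := by
      rw [hD, ← Multiset.prod_map_erase (f := fun s => X - C s) ht]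
    rw [hDt t ht, hfac]
    simp only [map_add, map_mul, map_pow, map_ofNat]
    ring
  rw [key]
  rw [show (fun t =>
          (X - C t) * D ^ 2
          + (-((3 * X ^ 2 + C A) * D)) * ((S.erase t).map (fun s => X - C s)).prod
          + (2 * (X ^ 3 + C A * X + C B))
              * (((S.erase t).map (fun s => X - C s)).prod) ^ 2)
      = (fun t =>
          ((X - C t) * D ^ 2
          + (-((3 * X ^ 2 + C A) * D)) * ((S.erase t).map (fun s => X - C s)).prod)
          + (2 * (X ^ 3 + C A * X + C B))
              * (((S.erase t).map (fun s => X - C s)).prod) ^ 2) from rfl]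
  rw [Multiset.sum_map_add, Multiset.sum_map_add, Multiset.sum_map_mul_right,
    Multiset.sum_map_mul_left, Multiset.sum_map_mul_left, sum_X_sub_C]
  have h1 : (S.map (fun t => ((S.erase t).map (fun s => X - C s)).prod)).sum = derivative D := by
    rw [hD, deriv_prod]
  have h2 : (S.map (fun t => (((S.erase t).map (fun s => X - C s)).prod) ^ 2)).sum
      = -(derivative (derivative D) * D - (derivative D) ^ 2) := by
    rw [hD, second_deriv_prod, neg_neg]
  rw [h1, h2, hσ, hℓ]
  push_cast
  rw [map_add, map_one]
  ring
end

section
/- Let K be a field, A, B ∈ K, let S be a finite multiset of elements of K, and let p_i = Σ_{t∈S} t^i denote its power sums (so p₀ = |S|). Then in the power series ring K[[u]]: Σ_{t∈S} [ (3t² + A)·u·(1 − tu)⁻¹ + 2·(t³ + A·t + B)·u²·(1 − tu)⁻² ] = Σ_{i≥1} h_i u^i, where h₁ = 3·p₂ + A·p₀ and h_i = (2i+1)·p_{i+1} + (2i−1)·A·p_{i−1} + 2(i−1)·B·p_{i−2} for all i ≥ 2. -/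
/-!
Expanding `(1 - t u)⁻¹ = Σ tⁿ uⁿ` and `u (1 - t u)⁻² = Σ n t^(n-1) uⁿ`, the coefficient of
`u^(n+1)` in the summand of a root `t` is `(3t² + A) tⁿ + 2n (t³ + At + B) t^(n-1)
= (2n+3) t^(n+2) + (2n+1) A tⁿ + 2n B t^(n-1)`, which is linear in the powers of `t`;
summing over the roots turns each power into a power sum. For `n = 0` the last term
vanishes, which is why the formula for `h₁` is the case `i = 1` of the general one.
-/

open PowerSeries

section Geometric

variable {K : Type*} [Field K]

theorem inv_one_sub_C_mul_X (t : K) : (1 - C t * X)⁻¹ = mk (t ^ ·) := by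
  rw [PowerSeries.inv_eq_iff_mul_eq_one (by simp)]
  ext (_ | n)
  · simp
  · simp [mul_sub, pow_succ, coeff_one, coeff_succ_X_mul, mul_comm, mul_left_comm]

theorem coeff_X_mul_inv_one_sub_C_mul_X_sq (t : K) (n : ℕ) :
    coeff n (X * (1 - C t * X)⁻¹ ^ 2) = n * t ^ (n - 1) := by
  cases n with
  | zero => simp
  | succ n =>
    rw [coeff_succ_X_mul, inv_one_sub_C_mul_X, sq, coeff_mul,
      Finset.sum_congr rfl fun x hx => by
        rw [coeff_mk, coeff_mk, ← pow_add, Finset.HasAntidiagonal.mem_antidiagonal.1 hx],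
      Finset.sum_const, Finset.Nat.card_antidiagonal, nsmul_eq_mul]
    simp

end Geometric

theorem coeff_succ_root_summand {K : Type*} [Field K] (A B t : K) (n : ℕ) :
    coeff (n + 1) (C (3 * t ^ 2 + A) * X * (1 - C t * X)⁻¹
        + 2 * C (t ^ 3 + A * t + B) * X ^ 2 * ((1 - C t * X)⁻¹) ^ 2)
      = (2 * n + 3) * t ^ (n + 2) + (2 * n + 1) * A * t ^ n + 2 * n * B * t ^ (n - 1) := by
  have hsplit : C (3 * t ^ 2 + A) * X * (1 - C t * X)⁻¹
        + 2 * C (t ^ 3 + A * t + B) * X ^ 2 * ((1 - C t * X)⁻¹) ^ 2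
      = C (3 * t ^ 2 + A) * (X * (1 - C t * X)⁻¹)
        + C (2 * (t ^ 3 + A * t + B)) * (X * (X * (1 - C t * X)⁻¹ ^ 2)) := by
    rw [map_mul, map_ofNat]
    ring
  rw [hsplit, map_add, coeff_C_mul, coeff_C_mul, coeff_succ_X_mul, coeff_succ_X_mul,
    coeff_X_mul_inv_one_sub_C_mul_X_sq, inv_one_sub_C_mul_X, coeff_mk]
  cases n with
  | zero => simp
  | succ n =>
    simp only [Nat.add_sub_cancel]
    push_cast
    ring

/-- Relation (fnpn) of the paper, linking the coefficients `h_i` of the expansion at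
infinity of `N(x)/D(x)` to the power sums `p_i` of the roots of `D`: in `K[[u]]`,
`Σ_{t∈S} [(3t²+A)·u/(1−tu) + 2(t³+At+B)·u²/(1−tu)²] = Σ_{i≥1} h_i u^i` where
`h₁ = 3p₂ + A·p₀` and `h_i = (2i+1)p_{i+1} + (2i−1)A·p_{i−1} + 2(i−1)B·p_{i−2}`
for `i ≥ 2`. -/
theorem expansion_at_infinity_power_sums {K : Type*} [Field K] (A B : K)
    (S : Multiset K) (p : ℕ → K) (hp : ∀ i, p i = (S.map (fun t => t ^ i)).sum)
    (h : ℕ → K)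
    (hh1 : h 1 = 3 * p 2 + A * p 0)
    (hhi : ∀ i, 2 ≤ i →
      h i = (2 * (i : K) + 1) * p (i + 1) + (2 * (i : K) - 1) * A * p (i - 1)
              + 2 * ((i : K) - 1) * B * p (i - 2)) :
    (S.map (fun t =>
        C (R := K) (3 * t ^ 2 + A) * X * (1 - C (R := K) t * X)⁻¹
          + 2 * C (R := K) (t ^ 3 + A * t + B) * X ^ 2 * ((1 - C (R := K) t * X)⁻¹) ^ 2)).sum
      = PowerSeries.mk (fun i => if i = 0 then 0 else h i) := by
  have h_succ : ∀ n : ℕ, h (n + 1)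
      = (2 * n + 3) * p (n + 2) + (2 * n + 1) * A * p n + 2 * n * B * p (n - 1) := by
    rintro (_ | n)
    · simp [hh1]
    · rw [hhi _ (by omega)]
      simp only [Nat.add_sub_cancel]
      push_cast
      ring
  ext n
  rw [coeff_mk, map_multiset_sum, Multiset.map_map]
  cases n with
  | zero => simp
  | succ n =>
    rw [if_neg n.succ_ne_zero, h_succ]
    simp only [Function.comp_def, coeff_succ_root_summand, Multiset.sum_map_add,
      Multiset.sum_map_mul_left, hp]
end

section
/- Let K be a field of characteristic zero and A, B, Ã ∈ K. Suppose W ∈ K[[u]] has zero constant term and satisfies the identity A·u + u·W' + 3A·u³·W' + 4B·u⁴·W' + 2u²·W'' + 2A·u⁴·W'' + 2B·u⁵·W'' = 6·W + 3u·W² + Ã·u in K[[u]]. Write W = Σ_{i≥1} h_i u^i. Then h₁ = (A − Ã)/5 and, for every k ≥ 3, h_k = (3/((k−2)(2k+3)))·Σ_{i=1}^{k−2} h_i h_{k−1−i} − ((2k−3)/(2k+3))·A·h_{k−2} − (2(k−3)/(2k+3))·B·h_{k−3}. -/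
/-!
Multiplying `W'` and `W''` by `u` and `u²` turns them into series whose `n`-th coefficients are
`n h_n` and `n (n - 1) h_n`. Hence the coefficient of `u^k` in the identity involves `h_k` only
through `(k + 2k(k - 1) - 6) h_k = (k - 2)(2k + 3) h_k`, plus the convolution `Σ h_i h_{k-1-i}` and
the lower coefficients `h_{k-2}`, `h_{k-3}` coming from the `A`- and `B`-terms. For `k = 1` the
factor is `-5`, and for `k ≥ 3` it is invertible in characteristic zero.
-/

open PowerSeries

section

variable {R : Type*}

theorem PowerSeries.coeff_X_mul_derivative [CommSemiring R] (f : R⟦X⟧) (n : ℕ) :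
    coeff n (X * d⁄dX R f) = n * coeff n f := by
  cases n with
  | zero => simp
  | succ n => rw [coeff_succ_X_mul, coeff_derivative, mul_comm]; push_cast; rfl

theorem PowerSeries.coeff_X_sq_mul_derivative_derivative [CommRing R] (f : R⟦X⟧) (n : ℕ) :
    coeff n (X ^ 2 * d⁄dX R (d⁄dX R f)) = n * (n - 1) * coeff n f := by
  rcases n with _ | _ | n
  · simp
  · simp [coeff_X_pow_mul']
  · rw [show n + 1 + 1 = n + 2 from rfl, coeff_X_pow_mul, coeff_derivative, coeff_derivative]
    push_cast
    ring

theorem PowerSeries.coeff_mul_eq_sum_Icc [CommSemiring R] {f g : R⟦X⟧}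
    (hf : constantCoeff f = 0) (hg : constantCoeff g = 0) (n : ℕ) :
    coeff n (f * g) = ∑ i ∈ Finset.Icc 1 (n - 1), coeff i f * coeff (n - i) g := by
  rw [coeff_mul, Finset.Nat.sum_antidiagonal_eq_sum_range_succ_mk]
  symm
  refine Finset.sum_subset (fun i hi => ?_) (fun i hi hi' => ?_)
  · simp only [Finset.mem_Icc, Finset.mem_range] at hi ⊢
    omega
  · simp only [Finset.mem_Icc, Finset.mem_range, not_and_or, not_le] at hi hi'
    rcases hi' with h | h
    · obtain rfl : i = 0 := by omega
      simp [hf]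
    · have hni : n - i = 0 := by omega
      simp [hni, hg]

end

def IsElkiesSolution {R : Type*} [CommRing R] (A B At : R) (W : R⟦X⟧) : Prop :=
  C A * X + X * d⁄dX R W + 3 * C A * X ^ 3 * d⁄dX R W
      + 4 * C B * X ^ 4 * d⁄dX R W + 2 * X ^ 2 * d⁄dX R (d⁄dX R W)
      + 2 * C A * X ^ 4 * d⁄dX R (d⁄dX R W) + 2 * C B * X ^ 5 * d⁄dX R (d⁄dX R W)
    = 6 * W + 3 * X * W ^ 2 + C At * X

namespace IsElkiesSolution

variable {R : Type*} [CommRing R] {A B At : R} {W : R⟦X⟧}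

theorem euler_form (h : IsElkiesSolution A B At W) :
    C A * X + (1 + C (3 * A) * X ^ 2 + C (4 * B) * X ^ 3) * (X * d⁄dX R W)
      + (C 2 + C (2 * A) * X ^ 2 + C (2 * B) * X ^ 3) * (X ^ 2 * d⁄dX R (d⁄dX R W))
      = C 6 * W + C 3 * (X * W ^ 2) + C At * X := by
  rw [IsElkiesSolution] at h
  simp only [map_mul, map_ofNat]
  linear_combination h

theorem coeff_one (h : IsElkiesSolution A B At W) (hW0 : constantCoeff W = 0) :
    A + coeff 1 W = 6 * coeff 1 W + At := by
  have h1 := congrArg (coeff 1) h.euler_form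
  -- Opaque names keep `coeff_X_pow_mul'` and `coeff_succ_X_mul` from splitting these factors.
  set θ := X * d⁄dX R W with hθ
  set ψ := X ^ 2 * d⁄dX R (d⁄dX R W) with hψ
  simp only [map_add, add_mul, one_mul, mul_assoc, coeff_C_mul, coeff_X_pow_mul', coeff_X,
    coeff_succ_X_mul] at h1
  norm_num [hW0] at h1
  rw [hθ, hψ, coeff_X_mul_derivative, coeff_X_sq_mul_derivative_derivative] at h1
  norm_num at h1
  linear_combination h1

theorem coeff_add_three (h : IsElkiesSolution A B At W) (m : ℕ) :
    ((m : R) + 1) * (2 * m + 9) * coeff (m + 3) W =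
      3 * coeff (m + 2) (W ^ 2) - ((m : R) + 1) * (2 * m + 3) * A * coeff (m + 1) W
        - 2 * m * (m + 1) * B * coeff m W := by
  have hm := congrArg (coeff (m + 3)) h.euler_form
  set θ := X * d⁄dX R W with hθ
  set ψ := X ^ 2 * d⁄dX R (d⁄dX R W) with hψ
  simp only [map_add, add_mul, one_mul, mul_assoc, coeff_C_mul, coeff_X_pow_mul', coeff_X,
    coeff_succ_X_mul] at hm
  norm_num at hm
  rw [hθ, hψ] at hm
  simp only [coeff_X_mul_derivative, coeff_X_sq_mul_derivative_derivative] at hm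
  push_cast at hm
  linear_combination hm

end IsElkiesSolution

/-- Elkies' recurrence (eq:elkies98): if `W = Σ_{i≥1} h_i u^i` satisfies the
`u`-form of Elkies' second-order differential equation
`A·u + u·W' + 3A·u³·W' + 4B·u⁴·W' + 2u²·W'' + 2A·u⁴·W'' + 2B·u⁵·W'' = 6W + 3u·W² + Ã·u`,
then `h₁ = (A − Ã)/5` and, for `k ≥ 3`,
`h_k = (3/((k−2)(2k+3)))·Σ_{i=1}^{k−2} h_i h_{k−1−i} − ((2k−3)/(2k+3))·A·h_{k−2}
       − (2(k−3)/(2k+3))·B·h_{k−3}`. -/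
theorem elkies_recurrence {K : Type*} [Field K] [CharZero K] (A B At : K)
    (W : PowerSeries K) (hW0 : constantCoeff W = 0)
    (hW : C A * X + X * d⁄dX K W + 3 * C A * X ^ 3 * d⁄dX K W
        + 4 * C B * X ^ 4 * d⁄dX K W + 2 * X ^ 2 * d⁄dX K (d⁄dX K W)
        + 2 * C A * X ^ 4 * d⁄dX K (d⁄dX K W) + 2 * C B * X ^ 5 * d⁄dX K (d⁄dX K W)
      = 6 * W + 3 * X * W ^ 2 + C At * X) :
    coeff 1 W = (A - At) / 5 ∧
    ∀ k, 3 ≤ k →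
      coeff k W =
        3 / (((k : K) - 2) * (2 * (k : K) + 3)) *
            (∑ i ∈ Finset.Icc 1 (k - 2), coeff i W * coeff (k - 1 - i) W)
          - ((2 * (k : K) - 3) / (2 * (k : K) + 3)) * A * coeff (k - 2) W
          - (2 * ((k : K) - 3) / (2 * (k : K) + 3)) * B * coeff (k - 3) W := by
  have hE : IsElkiesSolution A B At W := hW
  refine ⟨by linear_combination -(hE.coeff_one hW0) / 5, fun k hk => ?_⟩
  obtain ⟨m, rfl⟩ : ∃ m, k = m + 3 := ⟨k - 3, by omega⟩
  have hrec := hE.coeff_add_three m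
  rw [sq, coeff_mul_eq_sum_Icc hW0 hW0] at hrec
  have hm1 : (m : K) + 1 ≠ 0 := Nat.cast_add_one_ne_zero m
  -- stated in the normal form `field_simp` gives the denominator `2 * m + 9`
  have hm9 : (m : K) * 2 + 9 ≠ 0 := by exact_mod_cast (by omega : m * 2 + 9 ≠ 0)
  simp only [Nat.reduceSubDiff] at hrec ⊢
  push_cast
  rw [show (m : K) + 3 - 2 = m + 1 by ring, show 2 * ((m : K) + 3) + 3 = 2 * m + 9 by ring]
  field_simp
  linear_combination hrec
end

section
/- Let R be a commutative ring, ∂ : R → R a derivation, and A, B, f ∈ R with ∂A = 0, ∂B = 0, (∂f)² = 4·(f³ + A·f + B) and ∂(∂f) = 6·f² + 2·A. Define elements μ_{k,j} ∈ R for k ≥ 1 and j ∈ ℤ by: μ_{1,0} = 2·A, μ_{1,2} = 6, μ_{1,j} = 0 for all other j, and μ_{k+1,j} = (2j−2)(2j−1)·μ_{k,j−1} + (2j+1)(2j+2)·A·μ_{k,j+1} + (2j+2)(2j+4)·B·μ_{k,j+2}. Then μ_{k,j} = 0 whenever j < 0 or j > k+1, μ_{k,k+1} = (2k+1)!·1_R,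 and for every k ≥ 1 the 2k-th iterated derivative satisfies ∂^{2k} f = Σ_{j=0}^{k+1} μ_{k,j}·f^j. -/
/-!
For a polynomial `p` whose coefficients are constants, the chain rule gives
`∂²(p(f)) = p''(f)·(∂f)² + p'(f)·∂²f = (L p)(f)` with
`L p = 4(X³ + AX + B)·p'' + (6X² + 2A)·p'`, so `∂^{2k} f = (Lᵏ X)(f)`.
Comparing coefficients, `L` acts on coefficient sequences exactly by the recurrence for `μ`,
hence `Lᵏ X = ∑ⱼ μ_{k,j} Xʲ`. The vanishing of `μ_{k,j}` outside `0 ≤ j ≤ k + 1` and the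
leading coefficient `(2k+1)!` are read off from the recurrence by induction on `k`.
-/

open Polynomial

namespace Derivation

variable {R S A M : Type*} [CommSemiring S] [CommSemiring A] [Algebra S A] [AddCommMonoid M]
  [Module A M] [Module S M]

def ofLeibniz [CommRing R] (der : R → R) (hadd : ∀ x y : R, der (x + y) = der x + der y)
    (hmul : ∀ x y : R, der (x * y) = x * der y + y * der x) : Derivation ℤ R R :=
  mk' (AddMonoidHom.mk' der hadd).toIntLinearMap hmul

@[simp]
theorem coe_ofLeibniz [CommRing R] (der : R → R) (hadd : ∀ x y : R, der (x + y) = der x + der y)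
    (hmul : ∀ x y : R, der (x * y) = x * der y + y * der x) : ⇑(ofLeibniz der hadd hmul) = der :=
  rfl

theorem map_eval_of_map_coeff (D : Derivation S A M) {p : A[X]} (hp : ∀ n, D (p.coeff n) = 0)
    (x : A) : D (p.eval x) = p.derivative.eval x • D x := by
  rw [eval_eq_sum, derivative_eval, Polynomial.sum, Polynomial.sum, map_sum, Finset.sum_smul]
  refine Finset.sum_congr rfl fun n _ => ?_
  rw [D.leibniz, hp, smul_zero, add_zero, D.leibniz_pow, ← Nat.cast_smul_eq_nsmul A, smul_smul,
    smul_smul]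

theorem map_coeff_derivative (D : Derivation S A M) {p : A[X]} (hp : ∀ n, D (p.coeff n) = 0)
    (n : ℕ) : D (p.derivative.coeff n) = 0 := by
  simp [coeff_derivative, D.leibniz, hp]

end Derivation

namespace Elkies

variable {R S : Type*} [CommRing R] [CommRing S] [Algebra S R]

noncomputable def secondDerivPoly (A B : R) (p : R[X]) : R[X] :=
  4 * (X ^ 3 + C A * X + C B) * derivative (derivative p) + (6 * X ^ 2 + 2 * C A) * derivative p

def muStep (A B : R) (c : ℤ → R) (j : ℤ) : R :=
  ((2 * j - 2) * (2 * j - 1)) • c (j - 1) + ((2 * j + 1) * (2 * j + 2)) • (A * c (j + 1))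
    + ((2 * j + 2) * (2 * j + 4)) • (B * c (j + 2))

theorem muStep_eq_zero (A B : R) {c : ℤ → R} {N : ℤ} (hc : ∀ j, (j < 0 ∨ N < j) → c j = 0)
    {j : ℤ} (hj : j < 0 ∨ N + 1 < j) : muStep A B c j = 0 := by
  have h1 : c (j - 1) = 0 := hc _ (by omega)
  have h2 : (2 * j + 1) * (2 * j + 2) = 0 ∨ c (j + 1) = 0 := by
    rcases eq_or_ne j (-1) with rfl | h
    · norm_num
    · exact .inr (hc _ (by omega))
  have h3 : (2 * j + 2) * (2 * j + 4) = 0 ∨ c (j + 2) = 0 := by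
    rcases eq_or_ne j (-1) with rfl | h
    · norm_num
    rcases eq_or_ne j (-2) with rfl | h'
    · norm_num
    · exact .inr (hc _ (by omega))
  rcases h2 with h2 | h2 <;> rcases h3 with h3 | h3 <;> simp [muStep, h1, h2, h3]

theorem muStep_add_one (A B : R) {c : ℤ → R} {N : ℤ} (hc : ∀ j, N < j → c j = 0) :
    muStep A B c (N + 1) = (2 * N * (2 * N + 1)) • c N := by
  simp only [muStep, add_sub_cancel_right, hc (N + 1 + 1) (by omega),
    hc (N + 1 + 2) (by omega), mul_zero, smul_zero, add_zero]
  ring_nf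

theorem map_muStep (D : Derivation S R R) {A B : R} (hA : D A = 0) (hB : D B = 0) {c : ℤ → R}
    (hc : ∀ j, D (c j) = 0) (j : ℤ) : D (muStep A B c j) = 0 := by
  simp only [muStep, map_add, map_zsmul, D.leibniz, hA, hB, hc, smul_zero, add_zero]

theorem coeff_secondDerivPoly (A B : R) {p : R[X]} {c : ℤ → R} (hpc : ∀ n : ℕ, p.coeff n = c n)
    (hc : c (-1) = 0) (n : ℕ) : (secondDerivPoly A B p).coeff n = muStep A B c n := by
  simp only [secondDerivPoly, muStep, mul_add, add_mul, mul_assoc, coeff_add, coeff_ofNat_mul,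
    coeff_C_mul, coeff_X_pow_mul', coeff_derivative, hpc]
  rcases n with _ | _ | _ | n <;> simp [hc, coeff_X_mul, coeff_derivative, hpc] <;> ring_nf

theorem map_coeff_secondDerivPoly (D : Derivation S R R) {A B : R} (hA : D A = 0) (hB : D B = 0)
    {p : R[X]} (hp : ∀ n, D (p.coeff n) = 0) (n : ℕ) :
    D ((secondDerivPoly A B p).coeff n) = 0 := by
  rw [coeff_secondDerivPoly A B (c := fun j => if 0 ≤ j then p.coeff j.toNat else 0) (by simp)
    (by simp)]
  exact map_muStep D hA hB (fun j => by split_ifs <;> simp [hp]) n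

theorem map_map_eval_eq_eval_secondDerivPoly (D : Derivation S R R) {A B f : R}
    (hf : (D f) ^ 2 = 4 * (f ^ 3 + A * f + B)) (hf2 : D (D f) = 6 * f ^ 2 + 2 * A)
    {p : R[X]} (hp : ∀ n, D (p.coeff n) = 0) :
    D (D (p.eval f)) = (secondDerivPoly A B p).eval f := by
  rw [D.map_eval_of_map_coeff hp, smul_eq_mul, D.leibniz,
    D.map_eval_of_map_coeff (D.map_coeff_derivative hp), hf2]
  simp only [secondDerivPoly, eval_add, eval_mul, eval_pow, eval_X, eval_C, eval_ofNat, smul_eq_mul]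
  linear_combination (p.derivative.derivative.eval f) * hf

theorem iterate_two_mul_eq_eval (D : Derivation S R R) {A B f : R} (hA : D A = 0) (hB : D B = 0)
    (hf : (D f) ^ 2 = 4 * (f ^ 3 + A * f + B)) (hf2 : D (D f) = 6 * f ^ 2 + 2 * A) (k : ℕ) :
    D^[2 * k] f = ((secondDerivPoly A B)^[k] X).eval f ∧
      ∀ n, D (((secondDerivPoly A B)^[k] X).coeff n) = 0 := by
  induction k with
  | zero =>
    refine ⟨by simp, fun n => ?_⟩
    rw [Function.iterate_zero_apply, coeff_X]
    split_ifs <;> simp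
  | succ k ih =>
    obtain ⟨heval, hconst⟩ := ih
    rw [Function.iterate_succ_apply']
    refine ⟨?_, map_coeff_secondDerivPoly D hA hB hconst⟩
    rw [Nat.mul_succ, Function.iterate_succ_apply', Function.iterate_succ_apply', heval,
      map_map_eval_eq_eval_secondDerivPoly D hf hf2 hconst]

section Mu

variable {A B : R} {μ : ℕ → ℤ → R}

theorem mu_eq_zero_of_lt_zero_or_lt (hμ1 : ∀ j : ℤ, j ≠ 0 → j ≠ 2 → μ 1 j = 0)
    (hrec : ∀ k : ℕ, 1 ≤ k → ∀ j : ℤ, μ (k + 1) j = muStep A B (μ k) j) :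
    ∀ k : ℕ, 1 ≤ k → ∀ j : ℤ, (j < 0 ∨ (k : ℤ) + 1 < j) → μ k j = 0 := by
  intro k hk
  induction k, hk using Nat.le_induction with
  | base => exact fun j hj => hμ1 j (by omega) (by omega)
  | succ k hk ih =>
    intro j hj
    rw [hrec k hk]
    exact muStep_eq_zero A B ih (by push_cast at hj; omega)

theorem mu_natCast_add_one (hμ12 : μ 1 2 = 6)
    (hsupp : ∀ k : ℕ, 1 ≤ k → ∀ j : ℤ, (j < 0 ∨ (k : ℤ) + 1 < j) → μ k j = 0)
    (hrec : ∀ k : ℕ, 1 ≤ k → ∀ j : ℤ, μ (k + 1) j = muStep A B (μ k) j) :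
    ∀ k : ℕ, 1 ≤ k → μ k ((k : ℤ) + 1) = (2 * k + 1).factorial • (1 : R) := by
  intro k hk
  induction k, hk using Nat.le_induction with
  | base => norm_num [hμ12, Nat.factorial]
  | succ k hk ih =>
    rw [Nat.cast_succ, hrec k hk, muStep_add_one A B fun j hj => hsupp k hk j (.inr hj), ih,
      show 2 * (k + 1) + 1 = 2 * k + 1 + 1 + 1 by ring, Nat.factorial_succ (2 * k + 1 + 1),
      Nat.factorial_succ (2 * k + 1)]
    simp only [zsmul_eq_mul, nsmul_eq_mul, mul_one]
    push_cast
    ring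

theorem coeff_iterate_secondDerivPoly_X (hμ10 : μ 1 0 = 2 * A) (hμ12 : μ 1 2 = 6)
    (hμ1 : ∀ j : ℤ, j ≠ 0 → j ≠ 2 → μ 1 j = 0)
    (hsupp : ∀ k : ℕ, 1 ≤ k → ∀ j : ℤ, (j < 0 ∨ (k : ℤ) + 1 < j) → μ k j = 0)
    (hrec : ∀ k : ℕ, 1 ≤ k → ∀ j : ℤ, μ (k + 1) j = muStep A B (μ k) j) :
    ∀ k : ℕ, 1 ≤ k → ∀ n : ℕ, ((secondDerivPoly A B)^[k] X).coeff n = μ k n := by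
  intro k hk
  induction k, hk using Nat.le_induction with
  | base =>
    intro n
    rcases n with _ | _ | _ | n <;> simp [secondDerivPoly, hμ10, hμ12, hμ1]
    exact (hμ1 _ (by omega) (by omega)).symm
  | succ k hk ih =>
    intro n
    rw [Function.iterate_succ_apply', coeff_secondDerivPoly A B ih (hsupp k hk (-1) (by omega)),
      hrec k hk]

end Mu

end Elkies

open Elkies

/-- Elkies' 1992 identities: in a commutative ring `R` with a derivation `∂` and
elements `A, B, f` with `∂A = ∂B = 0`, `(∂f)² = 4(f³ + Af + B)` and
`∂²f = 6f² + 2A`, the constants `μ_{k,j}` defined by `μ_{1,0} = 2A`, `μ_{1,2} = 6`,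
`μ_{1,j} = 0` otherwise, and the recurrence
`μ_{k+1,j} = (2j−2)(2j−1)·μ_{k,j−1} + (2j+1)(2j+2)·A·μ_{k,j+1} + (2j+2)(2j+4)·B·μ_{k,j+2}`
satisfy `μ_{k,j} = 0` for `j < 0` or `j > k+1`, `μ_{k,k+1} = (2k+1)!·1`, and
`∂^{2k} f = Σ_{j=0}^{k+1} μ_{k,j}·f^j` for all `k ≥ 1`. -/
theorem elkies_mu_identities {R : Type*} [CommRing R] (der : R → R)
    (hadd : ∀ x y : R, der (x + y) = der x + der y)
    (hmul : ∀ x y : R, der (x * y) = x * der y + y * der x)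
    (A B f : R) (hA : der A = 0) (hB : der B = 0)
    (hf : (der f) ^ 2 = 4 * (f ^ 3 + A * f + B))
    (hf2 : der (der f) = 6 * f ^ 2 + 2 * A)
    (μ : ℕ → ℤ → R)
    (hμ10 : μ 1 0 = 2 * A) (hμ12 : μ 1 2 = 6)
    (hμ1 : ∀ j : ℤ, j ≠ 0 → j ≠ 2 → μ 1 j = 0)
    (hrec : ∀ k : ℕ, 1 ≤ k → ∀ j : ℤ,
      μ (k + 1) j = ((2 * j - 2) * (2 * j - 1)) • μ k (j - 1)
        + ((2 * j + 1) * (2 * j + 2)) • (A * μ k (j + 1))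
        + ((2 * j + 2) * (2 * j + 4)) • (B * μ k (j + 2))) :
    (∀ k : ℕ, 1 ≤ k → ∀ j : ℤ, (j < 0 ∨ (k : ℤ) + 1 < j) → μ k j = 0) ∧
    (∀ k : ℕ, 1 ≤ k → μ k ((k : ℤ) + 1) = (2 * k + 1).factorial • (1 : R)) ∧
    (∀ k : ℕ, 1 ≤ k → der^[2 * k] f = ∑ j ∈ Finset.range (k + 2), μ k (j : ℤ) * f ^ j) := by
  have hsupp := mu_eq_zero_of_lt_zero_or_lt hμ1 hrec
  have hcoeff := coeff_iterate_secondDerivPoly_X hμ10 hμ12 hμ1 hsupp hrec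
  refine ⟨hsupp, mu_natCast_add_one hμ12 hsupp hrec, fun k hk => ?_⟩
  have hdeg : ((secondDerivPoly A B)^[k] X).natDegree < k + 2 :=
    Nat.lt_succ_of_le <| natDegree_le_iff_coeff_eq_zero.2 fun n hn => by
      rw [hcoeff k hk]
      exact hsupp k hk n (.inr (by omega))
  rw [← Derivation.coe_ofLeibniz der hadd hmul, (iterate_two_mul_eq_eval _ hA hB hf hf2 k).1,
    eval_eq_sum_range' hdeg]
  simp only [hcoeff k hk]
end
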